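/- Let f = e^{-φ} be a log-concave function on ℝⁿ. If there exists a point x₀ ∈ ℝⁿ with (Lφ)(x₀) = ∞, then ∫_{ℝⁿ} (G ⋆ (ε·f))(x) dx does not converge to ∫_{ℝⁿ} G(x) dx as ε → 0⁺; in fact liminf_{ε→0⁺} ∫ (G ⋆ (ε·f)) > ∫ G. -/

import Mathlib

open MeasureTheory Filter Topology Real
open scoped ENNReal NNReal RealInnerProductSpace

noncomputable section

abbrev Euc (n : ℕ) := EuclideanSpace ℝ (Fin n)

/-- `f` is a log-concave function: nonnegative, not identically zero,
upper semi-continuous, and `f((1-t)x + ty) ≥ f(x)^(1-t) · f(y)^t`. -/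
def IsLogConcave {n : ℕ} (f : Euc n → ℝ) : Prop :=
  (∀ x, 0 ≤ f x) ∧ (∃ x, f x ≠ 0) ∧ UpperSemicontinuous f ∧
    ∀ x y : Euc n, ∀ t : ℝ, 0 ≤ t → t ≤ 1 →
      f x ^ (1 - t) * f y ^ t ≤ f ((1 - t) • x + t • y)

/-- `φ = -log f`, i.e. `f = e^{-φ}`, with `φ x = ⊤` exactly where `f x = 0`. -/
def IsNegLogOf {n : ℕ} (φ : Euc n → EReal) (f : Euc n → ℝ) : Prop :=
  ∀ x, (0 < f x → φ x = ((- Real.log (f x) : ℝ) : EReal)) ∧ (f x = 0 → φ x = ⊤)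

/-- The Legendre transform of an `EReal`-valued function:
`(Lφ)(x) = sup_y (⟨x,y⟩ - φ(y))`. -/
def legendre {n : ℕ} (φ : Euc n → EReal) (x : Euc n) : EReal :=
  ⨆ y : Euc n, ((inner ℝ x y : ℝ) : EReal) - φ y

/-- The standard gaussian probability measure `γₙ` on `ℝⁿ`,
with density `(2π)^(-n/2) e^{-|x|²/2}` w.r.t. Lebesgue measure. -/
def gaussianMeasure (n : ℕ) : Measure (Euc n) :=
  volume.withDensity fun x =>
    ENNReal.ofReal ((2 * π) ^ (-(n : ℝ) / 2) * Real.exp (-‖x‖ ^ 2 / 2))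

/-- The nonnegative part of an extended real number, as `ℝ≥0∞`. -/
def erealToENNReal (x : EReal) : ℝ≥0∞ :=
  if x = ⊤ then ⊤ else ENNReal.ofReal x.toReal

/-- Extended-real-valued integral: positive part minus negative part. -/
def eIntegral {α : Type*} [MeasurableSpace α] (μ : Measure α) (h : α → EReal) : EReal :=
  ((∫⁻ a, erealToENNReal (h a) ∂μ : ℝ≥0∞) : EReal) -
    ((∫⁻ a, erealToENNReal (-h a) ∂μ : ℝ≥0∞) : EReal)

/-- The mean width `M*(f) = (2/n) ∫ (Lφ) dγₙ` of `f = e^{-φ}`. -/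
def meanWidth (n : ℕ) (φ : Euc n → EReal) : EReal :=
  ((2 / n : ℝ) : EReal) * eIntegral (gaussianMeasure n) (legendre φ)

/-- The Asplund product (sup-convolution): `(f ⋆ g)(x) = sup_{x₁+x₂=x} f(x₁)g(x₂)`. -/
def asplund {n : ℕ} (f g : Euc n → ℝ) (x : Euc n) : ℝ :=
  ⨆ y : Euc n, f y * g (x - y)

/-- Homothety of a log-concave function: `(λ·f)(x) = f(x/λ)^λ`. -/
def homoth {n : ℕ} (l : ℝ) (f : Euc n → ℝ) (x : Euc n) : ℝ :=
  f (l⁻¹ • x) ^ l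

/-- The gaussian `G(x) = e^{-|x|²/2}`. -/
def gaussG {n : ℕ} (x : Euc n) : ℝ := Real.exp (-‖x‖ ^ 2 / 2)

/-- `∫ G ⋆ (ε·f)` over `ℝⁿ`. -/
def asplundIntegral (n : ℕ) (f : Euc n → ℝ) (ε : ℝ) : ℝ≥0∞ :=
  ∫⁻ x : Euc n, ENNReal.ofReal (asplund gaussG (homoth ε f) x)

/-- `∫ G` over `ℝⁿ`. -/
def gaussInt (n : ℕ) : ℝ≥0∞ := ∫⁻ x : Euc n, ENNReal.ofReal (gaussG x)

/-- The normalization constant `cₙ = 2/(n(2π)^(n/2))`. -/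
def cconst (n : ℕ) : ℝ := 2 / (n * (2 * π) ^ ((n : ℝ) / 2))

/-- Relative volume ratio `V(f) = (∫f / ∫G)^(1/n)` of `f ≥ G`. -/
def volRatio (n : ℕ) (f : Euc n → ℝ) : ℝ :=
  ((∫⁻ x : Euc n, ENNReal.ofReal (f x)).toReal) ^ (1 / (n : ℝ)) / Real.sqrt (2 * π)

open scoped Pointwise

/-!
Since `(Lφ)(x₀) = ∞`, the concave function `⟪x₀, ·⟫ + log f` is unbounded above. As `f` grows at
most exponentially, compactness of the unit sphere yields a unit vector `u` and points `z` of
arbitrarily large norm, with direction close to `u`, where this function is nonnegative; then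
`⟪x, z⟫ + log f z ≥ ‖z‖ / 2` for every `x` in the ball `K` of radius `1 / 4` around `x₀ + u`.

Testing the Asplund product at `w`, `G(x - εw) f(w)^ε = G(x) exp(ε (⟪x, w⟫ + log f w) - ε² ‖w‖² / 2)`.
For `x ∈ K` take `w = (1 - θ) y₀ + θ z` with `ε θ ‖z‖ = 1 / 2`: log-concavity makes the exponent at
least `1 / 16` once `ε` is small, so `G ⋆ (ε·f) ≥ e^{1/16} G` on `K`. Off `K`, testing at the fixed
point `y₀` gives a lower bound whose integral tends to `∫_{Kᶜ} G`. Hence the liminf of the integrals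
is at least `∫ G + (e^{1/16} - 1) ∫_K G`.
-/

namespace IsLogConcave

variable {n : ℕ} {f : Euc n → ℝ}

theorem log_le_log_segment (hf : IsLogConcave f) {x y : Euc n} (hx : 0 < f x) (hy : 0 < f y)
    {t : ℝ} (ht₀ : 0 ≤ t) (ht₁ : t ≤ 1) :
    0 < f ((1 - t) • x + t • y) ∧
      (1 - t) * Real.log (f x) + t * Real.log (f y) ≤ Real.log (f ((1 - t) • x + t • y)) := by
  have key := hf.2.2.2 x y t ht₀ ht₁
  have hpos : 0 < f x ^ (1 - t) * f y ^ t := by positivity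
  refine ⟨hpos.trans_le key, ?_⟩
  calc (1 - t) * Real.log (f x) + t * Real.log (f y) = Real.log (f x ^ (1 - t) * f y ^ t) := by
        rw [Real.log_mul (by positivity) (by positivity), Real.log_rpow hx, Real.log_rpow hy]
    _ ≤ _ := Real.log_le_log hpos key

theorem le_rpow_of_le_on_closedBall (hf : IsLogConcave f) {y₀ : Euc n} (h₀ : 0 < f y₀) {Q : ℝ}
    (hQ : 1 ≤ Q) (hball : ∀ p ∈ Metric.closedBall y₀ 1, f p ≤ min (f y₀) 1 * Q) (z : Euc n) :
    f z ≤ Q ^ (1 + ‖z - y₀‖) := by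
  have hm : 0 < min (f y₀) 1 := lt_min h₀ one_pos
  rcases le_or_gt ‖z - y₀‖ 1 with hz | hz
  · calc f z ≤ min (f y₀) 1 * Q := hball z (mem_closedBall_iff_norm.2 hz)
      _ ≤ Q ^ (1 : ℝ) := by rw [Real.rpow_one]; nlinarith [min_le_right (f y₀) 1]
      _ ≤ Q ^ (1 + ‖z - y₀‖) := Real.rpow_le_rpow_of_exponent_le hQ (by simp)
  -- compare `z` with the point of the segment `[y₀, z]` at distance one from `y₀`
  set d := ‖z - y₀‖
  have hd : 0 < d := one_pos.trans hz
  have hp : (1 - d⁻¹) • y₀ + d⁻¹ • z ∈ Metric.closedBall y₀ 1 := by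
    rw [mem_closedBall_iff_norm, show (1 - d⁻¹) • y₀ + d⁻¹ • z - y₀ = d⁻¹ • (z - y₀) by module,
      norm_smul, Real.norm_of_nonneg (inv_nonneg.2 hd.le), inv_mul_cancel₀ hd.ne']
  have hmin : min (f y₀) 1 ≤ f y₀ ^ (1 - d⁻¹) := by
    rcases le_or_gt 1 (f y₀) with h | h
    · exact (min_le_right _ _).trans (Real.one_le_rpow h (by simp [inv_le_one_of_one_le₀ hz.le]))
    · calc min (f y₀) 1 ≤ f y₀ ^ (1 : ℝ) := by simp
        _ ≤ f y₀ ^ (1 - d⁻¹) := Real.rpow_le_rpow_of_exponent_ge h₀ h.le (by simp [hd.le])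
  have hroot : f z ^ d⁻¹ ≤ Q := by
    refine le_of_mul_le_mul_left ?_ hm
    calc min (f y₀) 1 * f z ^ d⁻¹ ≤ f y₀ ^ (1 - d⁻¹) * f z ^ d⁻¹ :=
          mul_le_mul_of_nonneg_right hmin (by have := hf.1 z; positivity)
      _ ≤ f ((1 - d⁻¹) • y₀ + d⁻¹ • z) :=
          hf.2.2.2 y₀ z d⁻¹ (inv_nonneg.2 hd.le) (inv_le_one_of_one_le₀ hz.le)
      _ ≤ min (f y₀) 1 * Q := hball _ hp
  calc f z = (f z ^ d⁻¹) ^ d := by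
        rw [← Real.rpow_mul (hf.1 z), inv_mul_cancel₀ hd.ne', Real.rpow_one]
    _ ≤ Q ^ d := Real.rpow_le_rpow (by have := hf.1 z; positivity) hroot hd.le
    _ ≤ Q ^ (1 + d) := Real.rpow_le_rpow_of_exponent_le hQ (by linarith)

theorem exists_le_exp (hf : IsLogConcave f) :
    ∃ A B : ℝ, 0 ≤ B ∧ ∀ z, f z ≤ Real.exp (A + B * ‖z‖) := by
  obtain ⟨y₀, hy₀⟩ := hf.2.1
  have h₀ : 0 < f y₀ := (hf.1 y₀).lt_of_ne' hy₀
  have hm : 0 < min (f y₀) 1 := lt_min h₀ one_pos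
  obtain ⟨M, hM⟩ := (hf.2.2.1.upperSemicontinuousOn _).bddAbove_of_isCompact
    (isCompact_closedBall y₀ 1)
  set Q := max M 1 / min (f y₀) 1
  have hQ : 1 ≤ Q := by
    rw [le_div_iff₀ hm]; nlinarith [le_max_right M 1, min_le_right (f y₀) 1]
  have hball : ∀ p ∈ Metric.closedBall y₀ 1, f p ≤ min (f y₀) 1 * Q := fun p hp => by
    rw [mul_div_cancel₀ _ hm.ne']
    exact (hM ⟨p, hp, rfl⟩).trans (le_max_left M 1)
  refine ⟨Real.log Q * (1 + ‖y₀‖), Real.log Q, Real.log_nonneg hQ, fun z => ?_⟩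
  calc f z ≤ Q ^ (1 + ‖z - y₀‖) := hf.le_rpow_of_le_on_closedBall h₀ hQ hball z
    _ = Real.exp (Real.log Q * (1 + ‖z - y₀‖)) := by
        rw [Real.rpow_def_of_pos (one_pos.trans_le hQ)]
    _ ≤ Real.exp (Real.log Q * (1 + ‖y₀‖) + Real.log Q * ‖z‖) := by
        rw [← mul_add, add_assoc]
        exact Real.exp_le_exp.2 (mul_le_mul_of_nonneg_left
          (by linarith [norm_sub_le z y₀]) (Real.log_nonneg hQ))

end IsLogConcave

section Asplund

variable {n : ℕ}

theorem gaussG_sub_smul_mul_rpow (x z : Euc n) (ε : ℝ) {a : ℝ} (ha : 0 < a) :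
    gaussG (x - ε • z) * a ^ ε =
      gaussG x * Real.exp (ε * (⟪x, z⟫ + Real.log a) - ε ^ 2 * ‖z‖ ^ 2 / 2) := by
  simp only [gaussG]
  rw [Real.rpow_def_of_pos ha, ← Real.exp_add, ← Real.exp_add, norm_sub_sq_real,
    real_inner_smul_right, norm_smul, mul_pow, Real.norm_eq_abs, sq_abs]
  ring_nf

theorem bddAbove_range_gaussG_mul_homoth {f : Euc n → ℝ} (hf₀ : ∀ z, 0 ≤ f z) {A B : ℝ}
    (hB : 0 ≤ B) (hAB : ∀ z, f z ≤ Real.exp (A + B * ‖z‖)) {ε : ℝ} (hε : 0 < ε) (x : Euc n) :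
    BddAbove (Set.range fun y => gaussG y * homoth ε f (x - y)) := by
  refine ⟨Real.exp (ε * A + B * ‖x‖ + B ^ 2 / 2), ?_⟩
  rintro _ ⟨y, rfl⟩
  have hscale : ε * ‖ε⁻¹ • (x - y)‖ = ‖x - y‖ := by
    rw [norm_smul, Real.norm_of_nonneg (inv_nonneg.2 hε.le), mul_inv_cancel_left₀ hε.ne']
  calc gaussG y * homoth ε f (x - y)
      ≤ Real.exp (-‖y‖ ^ 2 / 2) * Real.exp (A + B * ‖ε⁻¹ • (x - y)‖) ^ ε := by
        unfold gaussG homoth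
        gcongr
        exacts [hf₀ _, hAB _]
    _ = Real.exp (-‖y‖ ^ 2 / 2 + ε * A + B * ‖x - y‖) := by
        rw [← Real.exp_mul, ← Real.exp_add, ← hscale]; ring_nf
    _ ≤ Real.exp (ε * A + B * ‖x‖ + B ^ 2 / 2) := by
        have := norm_sub_le x y
        refine Real.exp_le_exp.2 ?_
        nlinarith [sq_nonneg (‖y‖ - B)]

theorem IsLogConcave.gaussG_sub_smul_mul_rpow_le_asplund {f : Euc n → ℝ} (hf : IsLogConcave f)
    {ε : ℝ} (hε : 0 < ε) (x z : Euc n) :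
    gaussG (x - ε • z) * f z ^ ε ≤ asplund gaussG (homoth ε f) x := by
  -- `asplund` is a real `⨆`, which is `0` for a family unbounded above
  obtain ⟨A, B, hB, hAB⟩ := hf.exists_le_exp
  have h := le_ciSup (bddAbove_range_gaussG_mul_homoth hf.1 hB hAB hε x) (x - ε • z)
  rwa [sub_sub_cancel, homoth, smul_smul, inv_mul_cancel₀ hε.ne', one_smul] at h

end Asplund

section Legendre

variable {n : ℕ} {f : Euc n → ℝ}

theorem exists_lt_inner_add_log_of_legendre_eq_top (hf₀ : ∀ x, 0 ≤ f x) {φ : Euc n → EReal}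
    (hφ : IsNegLogOf φ f) {x₀ : Euc n} (h : legendre φ x₀ = ⊤) (r : ℝ) :
    ∃ y, 0 < f y ∧ r < ⟪x₀, y⟫ + Real.log (f y) := by
  obtain ⟨y, hy⟩ := iSup_eq_top.mp h r (EReal.coe_lt_top r)
  have hfy : 0 < f y := by
    refine (hf₀ y).lt_of_ne' fun h0 => ?_
    simp [(hφ y).2 h0] at hy
  rw [(hφ y).1 hfy, ← EReal.coe_sub, EReal.coe_lt_coe_iff, sub_neg_eq_add] at hy
  exact ⟨y, hfy, hy⟩

theorem IsLogConcave.exists_unit_direction_of_unbounded (hf : IsLogConcave f) {x₀ : Euc n}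
    (hx₀ : ∀ r : ℝ, ∃ y, 0 < f y ∧ r < ⟪x₀, y⟫ + Real.log (f y)) :
    ∃ u : Euc n, ‖u‖ = 1 ∧ ∀ (R η : ℝ), 0 < η → ∃ z, 0 < f z ∧ R ≤ ‖z‖ ∧
      ‖‖z‖⁻¹ • z - u‖ < η ∧ 0 ≤ ⟪x₀, z⟫ + Real.log (f z) := by
  obtain ⟨A, B, hB, hAB⟩ := hf.exists_le_exp
  have hfar : ∀ k : ℕ, ∃ y, 0 < f y ∧ (k : ℝ) + 1 < ‖y‖ ∧ 0 ≤ ⟪x₀, y⟫ + Real.log (f y) := by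
    intro k
    obtain ⟨y, hfy, hy⟩ := hx₀ (|A| + (B + ‖x₀‖) * (k + 1))
    have hlog : Real.log (f y) ≤ A + B * ‖y‖ := (Real.log_le_iff_le_exp hfy).2 (hAB y)
    have hinner : ⟪x₀, y⟫ ≤ ‖x₀‖ * ‖y‖ := real_inner_le_norm x₀ y
    have hgap : 0 ≤ (B + ‖x₀‖) * (k + 1) := by positivity
    refine ⟨y, hfy, ?_, by linarith [abs_nonneg A]⟩
    refine lt_of_mul_lt_mul_left (a := B + ‖x₀‖) ?_ (by positivity)
    nlinarith [le_abs_self A]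
  choose y hfy hny hy using hfar
  have hy₀ : ∀ k, 0 < ‖y k‖ := fun k => by linarith [hny k, (k.cast_nonneg : (0 : ℝ) ≤ k)]
  have hsphere : ∀ k, ‖y k‖⁻¹ • y k ∈ Metric.sphere (0 : Euc n) 1 := fun k => by
    rw [mem_sphere_zero_iff_norm, norm_smul, norm_inv, norm_norm, inv_mul_cancel₀ (hy₀ k).ne']
  obtain ⟨u, hu, σ, hσ, hlim⟩ := (isCompact_sphere (0 : Euc n) 1).tendsto_subseq hsphere
  refine ⟨u, mem_sphere_zero_iff_norm.1 hu, fun R η hη => ?_⟩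
  obtain ⟨j, hjη, hjR⟩ := ((hlim.eventually (Metric.ball_mem_nhds u hη)).and
    (eventually_ge_atTop ⌈R⌉₊)).exists
  refine ⟨y (σ j), hfy _, ?_, by simpa [dist_eq_norm] using hjη, hy _⟩
  have hσj : (j : ℝ) ≤ σ j := by exact_mod_cast hσ.le_apply
  linarith [Nat.le_ceil R, (Nat.cast_le (α := ℝ)).2 hjR, hny (σ j)]

end Legendre

section Core

variable {n : ℕ} {f : Euc n → ℝ}

theorem half_norm_le_inner {u d z : Euc n} (hu : ‖u‖ = 1) (hd : ‖d - u‖ ≤ 1 / 4)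
    (hz : ‖‖z‖⁻¹ • z - u‖ ≤ 1 / 4) : ‖z‖ / 2 ≤ ⟪d, z⟫ := by
  rcases eq_or_ne z 0 with rfl | hz₀
  · simp
  set v := ‖z‖⁻¹ • z
  have hz₀ : 0 < ‖z‖ := norm_pos_iff.2 hz₀
  have hv : ‖v‖ = 1 := by
    rw [norm_smul, norm_inv, norm_norm, inv_mul_cancel₀ hz₀.ne']
  have hdv : ⟪d, v⟫ = ‖u‖ ^ 2 + ⟪d - u, v⟫ + ⟪u, v - u⟫ := by
    rw [← real_inner_self_eq_norm_sq]
    simp only [inner_sub_left, inner_sub_right]; ring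
  have h₁ := neg_le_of_abs_le (abs_real_inner_le_norm (d - u) v)
  have h₂ := neg_le_of_abs_le (abs_real_inner_le_norm u (v - u))
  rw [hv] at h₁
  rw [hu] at h₂ hdv
  have hdv_half : 1 / 2 ≤ ⟪d, v⟫ := by nlinarith [norm_nonneg (d - u), norm_nonneg (v - u)]
  calc ‖z‖ / 2 ≤ ‖z‖ * ⟪d, v⟫ := by nlinarith
    _ = ⟪d, z⟫ := by rw [real_inner_smul_right, mul_inv_cancel_left₀ hz₀.ne']

theorem IsLogConcave.exp_mul_gaussG_le_asplund (hf : IsLogConcave f) {x y₀ z : Euc n}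
    {ε C : ℝ} (hε : 0 < ε) (hy₀ : 0 < f y₀) (hz : 0 < f z) (hC : 0 ≤ C)
    (hCy₀ : -C ≤ ⟪x, y₀⟫ + Real.log (f y₀)) (hεC : ε * (C + ‖y₀‖) ≤ 1 / 16)
    (hzε : 1 ≤ 2 * ε * ‖z‖) (hzx : ‖z‖ / 2 ≤ ⟪x, z⟫ + Real.log (f z)) :
    Real.exp (1 / 16) * gaussG x ≤ asplund gaussG (homoth ε f) x := by
  set θ := (2 * ε * ‖z‖)⁻¹
  have hθ₀ : 0 < θ := inv_pos.2 (one_pos.trans_le hzε)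
  have hθ₁ : θ ≤ 1 := inv_le_one_of_one_le₀ hzε
  have hθz : ε * θ * ‖z‖ = 1 / 2 := by
    rw [show ε * θ * ‖z‖ = 2 * ε * ‖z‖ * θ / 2 by ring, mul_inv_cancel₀ (by linarith)]
  set w := (1 - θ) • y₀ + θ • z
  obtain ⟨hw, hlog⟩ := hf.log_le_log_segment hy₀ hz hθ₀.le hθ₁
  have hinner : ⟪x, w⟫ = (1 - θ) * ⟪x, y₀⟫ + θ * ⟪x, z⟫ := by
    simp only [w, inner_add_right, real_inner_smul_right]
  have hnorm : ‖w‖ ≤ ‖y₀‖ + θ * ‖z‖ := by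
    calc ‖w‖ ≤ ‖(1 - θ) • y₀‖ + ‖θ • z‖ := norm_add_le _ _
      _ = (1 - θ) * ‖y₀‖ + θ * ‖z‖ := by
        rw [norm_smul, norm_smul, Real.norm_of_nonneg (by linarith), Real.norm_of_nonneg hθ₀.le]
      _ ≤ ‖y₀‖ + θ * ‖z‖ := by nlinarith [norm_nonneg y₀]
  have hvalue : -C + θ * (‖z‖ / 2) ≤ ⟪x, w⟫ + Real.log (f w) := by
    nlinarith
  have hεw : ε * ‖w‖ ≤ ε * ‖y₀‖ + 1 / 2 := by nlinarith
  have hexponent : 1 / 16 ≤ ε * (⟪x, w⟫ + Real.log (f w)) - ε ^ 2 * ‖w‖ ^ 2 / 2 := by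
    have hεy₀ : ε * ‖y₀‖ ≤ 1 / 16 := by nlinarith [norm_nonneg y₀]
    have hsq : (ε * ‖w‖) ^ 2 ≤ (ε * ‖y₀‖ + 1 / 2) ^ 2 :=
      pow_le_pow_left₀ (by positivity) hεw 2
    have hεH : 1 / 4 - ε * C ≤ ε * (⟪x, w⟫ + Real.log (f w)) := by
      nlinarith [mul_le_mul_of_nonneg_left hvalue hε.le]
    have hεy₀_sq : (ε * ‖y₀‖) ^ 2 ≤ ε * ‖y₀‖ / 16 := by
      nlinarith [mul_nonneg hε.le (norm_nonneg y₀)]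
    nlinarith [mul_nonneg hε.le (norm_nonneg y₀)]
  calc Real.exp (1 / 16) * gaussG x
      ≤ gaussG x * Real.exp (ε * (⟪x, w⟫ + Real.log (f w)) - ε ^ 2 * ‖w‖ ^ 2 / 2) := by
        rw [mul_comm]
        exact mul_le_mul_of_nonneg_left (Real.exp_le_exp.2 hexponent) (Real.exp_pos _).le
    _ = gaussG (x - ε • w) * f w ^ ε := (gaussG_sub_smul_mul_rpow x w ε hw).symm
    _ ≤ asplund gaussG (homoth ε f) x := hf.gaussG_sub_smul_mul_rpow_le_asplund hε x w

end Core

theorem IsLogConcave.exists_eventually_exp_mul_gaussG_le_asplund {n : ℕ} {f : Euc n → ℝ}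
    (hf : IsLogConcave f) {x₀ : Euc n}
    (hx₀ : ∀ r : ℝ, ∃ y, 0 < f y ∧ r < ⟪x₀, y⟫ + Real.log (f y)) :
    ∃ c : Euc n, ∀ᶠ ε in 𝓝[>] (0 : ℝ), ∀ x ∈ Metric.closedBall c (1 / 4),
      Real.exp (1 / 16) * gaussG x ≤ asplund gaussG (homoth ε f) x := by
  obtain ⟨u, hu, hdir⟩ := hf.exists_unit_direction_of_unbounded hx₀
  obtain ⟨y₀, hy₀⟩ := hf.2.1
  have h₀ : 0 < f y₀ := (hf.1 y₀).lt_of_ne' hy₀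
  set C := (‖x₀ + u‖ + 1 / 4) * ‖y₀‖ + |Real.log (f y₀)|
  have hC : 0 ≤ C := by positivity
  refine ⟨x₀ + u, ?_⟩
  filter_upwards [Ioo_mem_nhdsGT (by positivity : (0 : ℝ) < 1 / (16 * (C + ‖y₀‖ + 1)))]
    with ε ⟨hε, hεδ⟩ x hx
  have hεC : ε * (C + ‖y₀‖) ≤ 1 / 16 := by
    rw [lt_div_iff₀ (by positivity)] at hεδ
    nlinarith
  have hx' : ‖x - x₀ - u‖ ≤ 1 / 4 := by
    rwa [sub_sub, ← mem_closedBall_iff_norm]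
  have hCy₀ : -C ≤ ⟪x, y₀⟫ + Real.log (f y₀) := by
    have hxn : ‖x‖ ≤ ‖x₀ + u‖ + 1 / 4 := by
      have := norm_le_norm_add_norm_sub' x (x₀ + u)
      rw [mem_closedBall_iff_norm] at hx
      linarith
    have := neg_abs_le (Real.log (f y₀))
    have := neg_le_of_abs_le (abs_real_inner_le_norm x y₀)
    have := mul_le_mul_of_nonneg_right hxn (norm_nonneg y₀)
    simp only [C]
    linarith
  obtain ⟨z, hz, hzR, hzu, hzx₀⟩ := hdir (1 / (2 * ε)) (1 / 4) (by norm_num)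
  have hzε : 1 ≤ 2 * ε * ‖z‖ := by rwa [div_le_iff₀' (by positivity)] at hzR
  have hzx : ‖z‖ / 2 ≤ ⟪x, z⟫ + Real.log (f z) := by
    have := half_norm_le_inner hu hx' hzu.le
    rw [inner_sub_left] at this
    linarith
  exact hf.exp_mul_gaussG_le_asplund hε h₀ hz hC hCy₀ hεC hzε hzx

section Gaussian

theorem integrable_exp_neg_mul_sq_norm {V : Type*} [NormedAddCommGroup V] [InnerProductSpace ℝ V]
    [FiniteDimensional ℝ V] [MeasurableSpace V] [BorelSpace V] {b : ℝ} (hb : 0 < b) :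
    Integrable fun v : V => Real.exp (-b * ‖v‖ ^ 2) := by
  have h := (GaussianFourier.integrable_cexp_neg_mul_sq_norm_add (V := V) (b := b)
    (by simpa using hb) 0 0).norm
  refine h.congr (Eventually.of_forall fun v => ?_)
  simp only [zero_mul, add_zero, Complex.norm_exp]
  norm_cast

variable {n : ℕ}

theorem continuous_gaussG : Continuous (gaussG (n := n)) := by
  unfold gaussG; fun_prop

theorem gaussInt_lt_top (n : ℕ) : gaussInt n < ⊤ := by
  have h := integrable_exp_neg_mul_sq_norm (V := Euc n) (b := 1 / 2) (by norm_num)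
  convert h.lintegral_lt_top using 1
  simp only [gaussInt, gaussG]
  ring_nf

theorem setLIntegral_gaussG_pos (c : Euc n) {r : ℝ} (hr : 0 < r) :
    0 < ∫⁻ x in Metric.closedBall c r, ENNReal.ofReal (gaussG x) := by
  rw [setLIntegral_pos_iff continuous_gaussG.measurable.ennreal_ofReal]
  have hsupp : Function.support (fun x : Euc n => ENNReal.ofReal (gaussG x)) = Set.univ :=
    Set.eq_univ_of_forall fun x => by simp [gaussG, Real.exp_pos]
  rw [hsupp, Set.univ_inter]
  exact Metric.measure_closedBall_pos volume c hr

theorem gaussG_sub_smul_le (x y : Euc n) {ε : ℝ} (hε : |ε| ≤ 1) :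
    gaussG (x - ε • y) ≤ Real.exp (‖y‖ ^ 2 / 2) * Real.exp (-(1 / 4) * ‖x‖ ^ 2) := by
  have hεy : ‖ε • y‖ ≤ ‖y‖ := by
    rw [norm_smul, Real.norm_eq_abs]
    exact mul_le_of_le_one_left (norm_nonneg y) hε
  have hx : ‖x‖ ≤ ‖x - ε • y‖ + ‖ε • y‖ := norm_le_norm_sub_add x (ε • y)
  rw [gaussG, ← Real.exp_add]
  refine Real.exp_le_exp.2 ?_
  nlinarith [sq_nonneg (‖x - ε • y‖ - ‖ε • y‖), norm_nonneg (ε • y), norm_nonneg x]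

theorem tendsto_setLIntegral_gaussG_sub_smul (s : Set (Euc n)) (y : Euc n) :
    Tendsto (fun ε : ℝ => ∫⁻ x in s, ENNReal.ofReal (gaussG (x - ε • y))) (𝓝 0)
      (𝓝 (∫⁻ x in s, ENNReal.ofReal (gaussG x))) := by
  refine tendsto_lintegral_filter_of_dominated_convergence
    (fun x => ENNReal.ofReal (Real.exp (‖y‖ ^ 2 / 2) * Real.exp (-(1 / 4) * ‖x‖ ^ 2))) ?_ ?_ ?_ ?_
  · exact Eventually.of_forall fun ε =>
      (continuous_gaussG.comp (continuous_id.sub continuous_const)).measurable.ennreal_ofReal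
  · filter_upwards [Ioo_mem_nhds (neg_lt_zero.2 one_pos) one_pos] with ε hε
    exact ae_of_all _ fun x => ENNReal.ofReal_le_ofReal
      (gaussG_sub_smul_le x y (abs_le.2 ⟨hε.1.le, hε.2.le⟩))
  · refine ((setLIntegral_le_lintegral _ _).trans_lt ?_).ne
    exact ((integrable_exp_neg_mul_sq_norm (by norm_num)).const_mul _).lintegral_lt_top
  · refine ae_of_all _ fun x => ?_
    have hcont : Continuous fun ε : ℝ => ENNReal.ofReal (gaussG (x - ε • y)) :=
      ENNReal.continuous_ofReal.comp
        (continuous_gaussG.comp (continuous_const.sub (continuous_id.smul continuous_const)))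
    simpa using hcont.tendsto 0

theorem tendsto_setLIntegral_gaussG_sub_smul_mul_rpow (s : Set (Euc n)) (y : Euc n) {a : ℝ}
    (ha : 0 < a) :
    Tendsto (fun ε : ℝ => ∫⁻ x in s, ENNReal.ofReal (gaussG (x - ε • y) * a ^ ε)) (𝓝 0)
      (𝓝 (∫⁻ x in s, ENNReal.ofReal (gaussG x))) := by
  have hsplit : ∀ ε : ℝ, ∫⁻ x in s, ENNReal.ofReal (gaussG (x - ε • y) * a ^ ε) =
      (∫⁻ x in s, ENNReal.ofReal (gaussG (x - ε • y))) * ENNReal.ofReal (a ^ ε) := fun ε => by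
    simp_rw [ENNReal.ofReal_mul' (Real.rpow_nonneg ha.le ε)]
    exact lintegral_mul_const' _ _ ENNReal.ofReal_ne_top
  have hpow : Tendsto (fun ε : ℝ => ENNReal.ofReal (a ^ ε)) (𝓝 0) (𝓝 1) := by
    simpa [Function.comp_def] using (ENNReal.continuous_ofReal.tendsto _).comp
      (Real.continuousAt_const_rpow ha.ne' (b := 0)).tendsto
  simpa [hsplit] using ENNReal.Tendsto.mul (tendsto_setLIntegral_gaussG_sub_smul s y)
    (Or.inr ENNReal.one_ne_top) hpow (Or.inl one_ne_zero)

end Gaussian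

theorem lintegral_lt_liminf_lintegral {ι α : Type*} [MeasurableSpace α] {μ : Measure α}
    {l : Filter ι} [l.NeBot] {F a : ι → α → ℝ≥0∞} {g : α → ℝ≥0∞} {K : Set α} {c : ℝ≥0∞}
    (hK : MeasurableSet K) (hc : 1 < c) (hgK : ∫⁻ x in K, g x ∂μ ≠ 0) (hg : ∫⁻ x, g x ∂μ ≠ ⊤)
    (ha : Tendsto (fun i => ∫⁻ x in Kᶜ, a i x ∂μ) l (𝓝 (∫⁻ x in Kᶜ, g x ∂μ)))
    (hFK : ∀ᶠ i in l, ∀ x ∈ K, c * g x ≤ F i x) (hFa : ∀ᶠ i in l, ∀ x, a i x ≤ F i x) :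
    ∫⁻ x, g x ∂μ < liminf (fun i => ∫⁻ x, F i x ∂μ) l := by
  rw [← lintegral_add_compl g hK] at hg ⊢
  have hlow : ∀ᶠ i in l,
      c * ∫⁻ x in K, g x ∂μ + ∫⁻ x in Kᶜ, a i x ∂μ ≤ ∫⁻ x, F i x ∂μ := by
    filter_upwards [hFK, hFa] with i hiK hia
    rw [← lintegral_add_compl (F i) hK]
    gcongr ?_ + ?_
    · exact (lintegral_const_mul_le _ _).trans (setLIntegral_mono' hK hiK)
    · exact lintegral_mono hia
  have hgain : ∫⁻ x in K, g x ∂μ < c * ∫⁻ x in K, g x ∂μ := by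
    simpa [mul_comm] using ENNReal.mul_lt_mul_right hgK (ENNReal.add_ne_top.1 hg).1 hc
  calc ∫⁻ x in K, g x ∂μ + ∫⁻ x in Kᶜ, g x ∂μ
      < c * ∫⁻ x in K, g x ∂μ + ∫⁻ x in Kᶜ, g x ∂μ :=
        ENNReal.add_lt_add_right (ENNReal.add_ne_top.1 hg).2 hgain
    _ = liminf (fun i => c * ∫⁻ x in K, g x ∂μ + ∫⁻ x in Kᶜ, a i x ∂μ) l :=
        (tendsto_const_nhds.add ha).liminf_eq.symm
    _ ≤ liminf (fun i => ∫⁻ x, F i x ∂μ) l := liminf_le_liminf hlow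

/-- **Lemma.** If `f = e^{-φ}` is log-concave and `(Lφ)(x₀) = ∞` for some point `x₀`,
then `∫ G ⋆ (ε·f)` does not converge to `∫ G` as `ε → 0⁺`;
in fact `liminf_{ε→0⁺} ∫ G ⋆ (ε·f) > ∫ G`. -/
theorem asplundIntegral_not_tendsto_gaussInt_of_legendre_infinite
    (n : ℕ) (f : Euc n → ℝ) (φ : Euc n → EReal)
    (hf : IsLogConcave f) (hφ : IsNegLogOf φ f)
    (hL : ∃ x₀, legendre φ x₀ = ⊤) :
    ¬ Tendsto (fun ε : ℝ => asplundIntegral n f ε) (𝓝[>] (0 : ℝ)) (𝓝 (gaussInt n)) ∧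
      gaussInt n < Filter.liminf (fun ε : ℝ => asplundIntegral n f ε) (𝓝[>] (0 : ℝ)) := by
  obtain ⟨x₀, hx₀⟩ := hL
  obtain ⟨c, hc⟩ := hf.exists_eventually_exp_mul_gaussG_le_asplund
    (exists_lt_inner_add_log_of_legendre_eq_top hf.1 hφ hx₀)
  obtain ⟨y₀, hy₀⟩ := hf.2.1
  have key : gaussInt n < liminf (fun ε : ℝ => asplundIntegral n f ε) (𝓝[>] (0 : ℝ)) :=
    lintegral_lt_liminf_lintegral (K := Metric.closedBall c (1 / 4))
      (c := ENNReal.ofReal (Real.exp (1 / 16)))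
      (a := fun ε x => ENNReal.ofReal (gaussG (x - ε • y₀) * f y₀ ^ ε))
      measurableSet_closedBall (by simp)
      (setLIntegral_gaussG_pos c (by norm_num)).ne' (gaussInt_lt_top n).ne
      ((tendsto_setLIntegral_gaussG_sub_smul_mul_rpow _ y₀
        ((hf.1 y₀).lt_of_ne' hy₀)).mono_left nhdsWithin_le_nhds)
      (hc.mono fun ε hε x hx => by
        rw [← ENNReal.ofReal_mul (Real.exp_pos _).le]
        exact ENNReal.ofReal_le_ofReal (hε x hx))
      (eventually_mem_nhdsWithin.mono fun ε hε x =>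
        ENNReal.ofReal_le_ofReal (hf.gaussG_sub_smul_mul_rpow_le_asplund hε x y₀))
  exact ⟨fun h => key.ne h.liminf_eq.symm, key⟩
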